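/- arXiv:1102.1895 — 8 statements merged into one kernel-verified Lean document; each statement's English description precedes it below -/
import Mathlib

section
/- Let ε ∈ (0,1), C ≥ 0, and θ : (0,∞) → [0,∞) be nonincreasing with ∫₁^∞ θ(u)·ln u du < ∞ and ∫_a^∞ θ(u) du < ∞ for every a > 0. Let k : ℝ → ℝ satisfy |k(r)| ≤ C ∫_{|r|}^∞ θ(u) du for all r ≠ 0. Then for every ρ > 0 and every r with |r| > ρ, the series ∑_{n=0}^∞ |k(r·ε^{−n})| converges and ∑_{n=0}^∞ |k(r·ε^{−n})| ≤ (C / ln(1/ε)) · ∫_{ερ}^∞ θ(u)·ln(u/(ερ)) du. -/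
/-!
Put `Ψ(a) = ∫_a^∞ θ(u) log(u/a) du`. Splitting `log(u/a) = log(u/b) + log(b/a)` on `(b, ∞)` gives
`log(b/a) ∫_b^∞ θ + Ψ(b) ≤ Ψ(a)` for `a ≤ b`. Along the geometric sequence `a_n = ερ/εⁿ` this
telescopes: `log(1/ε) ∑ₙ ∫_{ρ/εⁿ}^∞ θ ≤ Ψ(ερ)`, and `|k(r/εⁿ)| ≤ C ∫_{ρ/εⁿ}^∞ θ` whenever `|r| > ρ`.
-/

open MeasureTheory Filter Set

noncomputable def logTailIntegral (θ : ℝ → ℝ) (a : ℝ) : ℝ :=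
  ∫ u in Ioi a, θ u * Real.log (u / a)

section

variable {θ : ℝ → ℝ}

theorem integrableOn_mul_log_div {a : ℝ} (ha : 0 < a) (hθ : IntegrableOn θ (Ioi a))
    (hθ_log : IntegrableOn (fun u => θ u * Real.log u) (Ioi 1)) :
    IntegrableOn (fun u => θ u * Real.log (u / a)) (Ioi a) := by
  set M := max a 1
  have hM : 0 < M := zero_lt_one.trans_le (le_max_right a 1)
  rw [← Ioc_union_Ioi_eq_Ioi (le_max_left a 1)]
  refine IntegrableOn.union ?_ ?_
  · refine ((hθ.mono_set Ioc_subset_Ioi_self).norm.const_mul (Real.log (M / a))).mono' ?_ ?_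
    · exact (hθ.mono_set Ioc_subset_Ioi_self).aestronglyMeasurable.mul
        (Real.measurable_log.comp (measurable_id.div_const a)).aestronglyMeasurable
    · filter_upwards [ae_restrict_mem measurableSet_Ioc] with u hu
      have hlog : 0 ≤ Real.log (u / a) := Real.log_nonneg ((one_le_div ha).mpr hu.1.le)
      rw [norm_mul, Real.norm_of_nonneg hlog, mul_comm]
      gcongr
      · exact div_pos (ha.trans hu.1) ha
      · exact hu.2
  · refine ((hθ_log.mono_set (Ioi_subset_Ioi (le_max_right a 1))).sub
      ((hθ.mono_set (Ioi_subset_Ioi (le_max_left a 1))).const_mul (Real.log a))).congr_fun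
      (fun u hu => ?_) measurableSet_Ioi
    simp only [Pi.sub_apply]
    rw [Real.log_div (hM.trans hu).ne' ha.ne']
    ring

variable (hθ_nonneg : ∀ x, 0 < x → 0 ≤ θ x)
  (hθ_log : IntegrableOn (fun u => θ u * Real.log u) (Ioi 1))
  (hθ_int : ∀ a, 0 < a → IntegrableOn θ (Ioi a))
include hθ_nonneg

theorem logTailIntegral_nonneg {a : ℝ} (ha : 0 < a) : 0 ≤ logTailIntegral θ a :=
  setIntegral_nonneg measurableSet_Ioi fun u hu =>
    mul_nonneg (hθ_nonneg u (ha.trans hu)) (Real.log_nonneg ((one_le_div ha).mpr hu.le))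

theorem setIntegral_Ioi_antitone {a b : ℝ} (ha : 0 < a) (hab : a ≤ b)
    (hθ : IntegrableOn θ (Ioi a)) : ∫ u in Ioi b, θ u ≤ ∫ u in Ioi a, θ u :=
  setIntegral_mono_set hθ
    (ae_restrict_of_forall_mem measurableSet_Ioi fun u hu => hθ_nonneg u (ha.trans hu))
    (Ioi_subset_Ioi hab).eventuallyLE

include hθ_log hθ_int

theorem log_div_mul_integral_add_logTailIntegral_le {a b : ℝ} (ha : 0 < a) (hab : a ≤ b) :
    Real.log (b / a) * (∫ u in Ioi b, θ u) + logTailIntegral θ b ≤ logTailIntegral θ a := by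
  have hb : 0 < b := ha.trans_le hab
  have hsplit : EqOn (fun u => θ u * Real.log (u / a))
      (fun u => θ u * Real.log (u / b) + Real.log (b / a) * θ u) (Ioi b) := fun u hu => by
    have hu : 0 < u := hb.trans hu
    simp only [Real.log_div hu.ne' ha.ne', Real.log_div hu.ne' hb.ne', Real.log_div hb.ne' ha.ne']
    ring
  have htail : ∫ u in Ioi b, θ u * Real.log (u / a) ≤ logTailIntegral θ a :=
    setIntegral_mono_set (integrableOn_mul_log_div ha (hθ_int a ha) hθ_log)
      (ae_restrict_of_forall_mem measurableSet_Ioi fun u hu =>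
        mul_nonneg (hθ_nonneg u (ha.trans hu)) (Real.log_nonneg ((one_le_div ha).mpr hu.le)))
      (Ioi_subset_Ioi hab).eventuallyLE
  rw [setIntegral_congr_fun measurableSet_Ioi hsplit,
    integral_add (integrableOn_mul_log_div hb (hθ_int b hb) hθ_log) ((hθ_int b hb).const_mul _),
    integral_const_mul] at htail
  unfold logTailIntegral at htail ⊢
  linarith

theorem log_inv_mul_sum_integral_Ioi_le {ε a : ℝ} (hε : ε ∈ Ioo (0 : ℝ) 1) (ha : 0 < a)
    (N : ℕ) :
    Real.log (1 / ε) * ∑ n ∈ Finset.range N, ∫ u in Ioi (a / ε ^ (n + 1)), θ u ≤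
      logTailIntegral θ a := by
  obtain ⟨hε0, hε1⟩ := hε
  have hpos (n : ℕ) : 0 < a / ε ^ n := by positivity
  have hstep (n : ℕ) : Real.log (1 / ε) * ∫ u in Ioi (a / ε ^ (n + 1)), θ u ≤
      logTailIntegral θ (a / ε ^ n) - logTailIntegral θ (a / ε ^ (n + 1)) := by
    have hle : a / ε ^ n ≤ a / ε ^ (n + 1) :=
      div_le_div_of_nonneg_left ha.le (by positivity) (pow_le_pow_of_le_one hε0.le hε1.le n.le_succ)
    have hratio : a / ε ^ (n + 1) / (a / ε ^ n) = 1 / ε := by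
      field_simp [ha.ne', hε0.ne']
      ring
    have := log_div_mul_integral_add_logTailIntegral_le hθ_nonneg hθ_log hθ_int (hpos n) hle
    rw [hratio] at this
    linarith
  calc Real.log (1 / ε) * ∑ n ∈ Finset.range N, ∫ u in Ioi (a / ε ^ (n + 1)), θ u
      ≤ ∑ n ∈ Finset.range N,
          (logTailIntegral θ (a / ε ^ n) - logTailIntegral θ (a / ε ^ (n + 1))) := by
        rw [Finset.mul_sum]
        exact Finset.sum_le_sum fun n _ => hstep n
    _ = logTailIntegral θ a - logTailIntegral θ (a / ε ^ N) := by
        rw [Finset.sum_range_sub', pow_zero, div_one]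
    _ ≤ logTailIntegral θ a := sub_le_self _ (logTailIntegral_nonneg hθ_nonneg (hpos N))

end

theorem stmt1_general (ε C : ℝ) (hε : ε ∈ Ioo (0 : ℝ) 1) (hC : 0 ≤ C)
    (θ : ℝ → ℝ)
    (hθ_nonneg : ∀ x : ℝ, 0 < x → 0 ≤ θ x)
    (hθ_logint : IntegrableOn (fun u => θ u * Real.log u) (Ioi (1 : ℝ)))
    (hθ_int : ∀ a : ℝ, 0 < a → IntegrableOn θ (Ioi a))
    (k : ℝ → ℝ)
    (hk : ∀ r : ℝ, r ≠ 0 → |k r| ≤ C * ∫ u in Ioi |r|, θ u) :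
    ∀ ρ : ℝ, 0 < ρ → ∀ r : ℝ, ρ < |r| →
      Summable (fun n : ℕ => |k (r / ε ^ n)|) ∧
      (∑' n : ℕ, |k (r / ε ^ n)|) ≤
        (C / Real.log (1 / ε)) * ∫ u in Ioi (ε * ρ), θ u * Real.log (u / (ε * ρ)) := by
  intro ρ hρ r hr
  have hε0 := hε.1
  have hL : 0 < Real.log (1 / ε) := Real.log_pos (one_lt_one_div hε0 hε.2)
  have hterm (n : ℕ) : |k (r / ε ^ n)| ≤ C * ∫ u in Ioi (ε * ρ / ε ^ (n + 1)), θ u := by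
    have hshift : ε * ρ / ε ^ (n + 1) = ρ / ε ^ n := by
      field_simp [hε0.ne']
      ring
    have hr0 : r / ε ^ n ≠ 0 := div_ne_zero (abs_pos.mp (hρ.trans hr)) (by positivity)
    rw [hshift]
    refine (hk _ hr0).trans (mul_le_mul_of_nonneg_left ?_ hC)
    rw [abs_div, abs_of_pos (by positivity : 0 < ε ^ n)]
    exact setIntegral_Ioi_antitone hθ_nonneg (by positivity) (by gcongr) (hθ_int _ (by positivity))
  have hpartial (N : ℕ) : ∑ n ∈ Finset.range N, |k (r / ε ^ n)| ≤
      C / Real.log (1 / ε) * logTailIntegral θ (ε * ρ) := by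
    calc ∑ n ∈ Finset.range N, |k (r / ε ^ n)|
        ≤ C * ∑ n ∈ Finset.range N, ∫ u in Ioi (ε * ρ / ε ^ (n + 1)), θ u := by
          rw [Finset.mul_sum]
          exact Finset.sum_le_sum fun n _ => hterm n
      _ ≤ C / Real.log (1 / ε) * logTailIntegral θ (ε * ρ) := by
          rw [div_mul_eq_mul_div, le_div_iff₀ hL, mul_assoc, mul_comm _ (Real.log _)]
          exact mul_le_mul_of_nonneg_left
            (log_inv_mul_sum_integral_Ioi_le hθ_nonneg hθ_logint hθ_int hε (by positivity) N) hC
  have hsummable := summable_of_sum_range_le (fun n => abs_nonneg _) hpartial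
  exact ⟨hsummable, hsummable.tsum_le_of_sum_range_le hpartial⟩

/-- Absolute convergence of the series `K^ε(r) = ∑ k(r/ε^n)` on `{|r| > ρ}`
together with the explicit bound from the paper. -/
theorem stmt1 (ε C : ℝ) (hε : ε ∈ Ioo (0 : ℝ) 1) (hC : 0 ≤ C)
    (θ : ℝ → ℝ)
    (hθ_nonneg : ∀ x : ℝ, 0 < x → 0 ≤ θ x)
    (hθ_mono : ∀ x y : ℝ, 0 < x → x ≤ y → θ y ≤ θ x)
    (hθ_logint : IntegrableOn (fun u => θ u * Real.log u) (Ioi (1 : ℝ)))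
    (hθ_int : ∀ a : ℝ, 0 < a → IntegrableOn θ (Ioi a))
    (k : ℝ → ℝ)
    (hk : ∀ r : ℝ, r ≠ 0 → |k r| ≤ C * ∫ u in Ioi |r|, θ u) :
    ∀ ρ : ℝ, 0 < ρ → ∀ r : ℝ, ρ < |r| →
      Summable (fun n : ℕ => |k (r / ε ^ n)|) ∧
      (∑' n : ℕ, |k (r / ε ^ n)|) ≤
        (C / Real.log (1 / ε)) * ∫ u in Ioi (ε * ρ), θ u * Real.log (u / (ε * ρ)) :=
  stmt1_general ε C hε hC θ hθ_nonneg hθ_logint hθ_int k hk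
end

section
/- Let ε ∈ (0,1), C ≥ 0, and θ : (0,∞) → [0,∞) be nonincreasing with ∫_a^∞ θ(u) du < ∞ for every a > 0. Let k : ℝ → ℝ satisfy |k(r) − k(r')| ≤ C·θ(min(|r|,|r'|))·|r − r'| for all nonzero r, r'. Then for every ρ > 0 and all r, r' with |r| > ρ and |r'| > ρ, ∑_{n=0}^∞ |k(r·ε^{−n}) − k(r'·ε^{−n})| ≤ (C/(ρ·ε·ln(1/ε))) · |r − r'| · ∫_{ρε}^∞ θ(u) du. In particular K^ε(r) = ∑_{n=0}^∞ k(r/ε^n) is Lipschitz on {r : |r| > ρ} whenever the series converges. -/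
/-!
Rescaling the Lipschitz bound for `k` by `ε ^ n` bounds the `n`-th term by
`C |r - r'| θ(ρ/εⁿ) / εⁿ`. Up to the factor `ρ (1 - ε)`, this is the right-endpoint Riemann
term `(ρ/εⁿ - ρ/εⁿ⁻¹) θ(ρ/εⁿ)` of the nonincreasing function `θ` on `[ρ/εⁿ⁻¹, ρ/εⁿ]`, so the
series is dominated by `∫_{ρε}^∞ θ`. Finally `ε log(1/ε) ≤ 1 - ε` since `log x ≤ x - 1`.
-/

open MeasureTheory Filter Set Finset

lemma mul_log_one_div_le_one_sub {ε : ℝ} (hε : 0 < ε) : ε * Real.log (1 / ε) ≤ 1 - ε := by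
  have h := Real.log_le_sub_one_of_pos (one_div_pos.mpr hε)
  calc ε * Real.log (1 / ε) ≤ ε * (1 / ε - 1) := by gcongr
    _ = 1 - ε := by field_simp

namespace AntitoneOn

variable {θ : ℝ → ℝ}

lemma sub_mul_le_intervalIntegral {a b : ℝ} (hab : a ≤ b) (hθ : AntitoneOn θ (Icc a b)) :
    (b - a) * θ b ≤ ∫ u in a..b, θ u := by
  have hint : IntervalIntegrable θ volume a b := by
    apply AntitoneOn.intervalIntegrable
    rwa [uIcc_of_le hab]
  calc (b - a) * θ b = ∫ _ in a..b, θ b := by simp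
    _ ≤ ∫ u in a..b, θ u :=
      intervalIntegral.integral_mono_on hab intervalIntegrable_const hint
        fun u hu => hθ hu (right_mem_Icc.mpr hab) hu.2

lemma sum_sub_mul_le_setIntegral_Ioi {x : ℕ → ℝ} (hx : Monotone x)
    (hθ : AntitoneOn θ (Ici (x 0))) (hθ_nonneg : ∀ u ∈ Ioi (x 0), 0 ≤ θ u)
    (hθ_int : IntegrableOn θ (Ioi (x 0))) (N : ℕ) :
    ∑ n ∈ range N, (x (n + 1) - x n) * θ (x (n + 1)) ≤ ∫ u in Ioi (x 0), θ u := by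
  have hθ_Icc : ∀ n, AntitoneOn θ (Icc (x n) (x (n + 1))) := fun n =>
    hθ.mono fun u hu => (hx n.zero_le).trans hu.1
  have hint : ∀ n, IntervalIntegrable θ volume (x n) (x (n + 1)) := fun n =>
    AntitoneOn.intervalIntegrable (by rw [uIcc_of_le (hx n.le_succ)]; exact hθ_Icc n)
  calc ∑ n ∈ range N, (x (n + 1) - x n) * θ (x (n + 1))
      ≤ ∑ n ∈ range N, ∫ u in x n..x (n + 1), θ u :=
        sum_le_sum fun n _ => sub_mul_le_intervalIntegral (hx n.le_succ) (hθ_Icc n)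
    _ = ∫ u in x 0..x N, θ u :=
        intervalIntegral.sum_integral_adjacent_intervals fun n _ => hint n
    _ = ∫ u in Ioc (x 0) (x N), θ u := intervalIntegral.integral_of_le (hx N.zero_le)
    _ ≤ ∫ u in Ioi (x 0), θ u :=
        setIntegral_mono_set hθ_int
          ((ae_restrict_iff' measurableSet_Ioi).mpr (Eventually.of_forall hθ_nonneg))
          Ioc_subset_Ioi_self.eventuallyLE

end AntitoneOn

section

variable {ε C ρ : ℝ} {θ k : ℝ → ℝ}

lemma abs_sub_le_of_le_abs (hC : 0 ≤ C) (hθ : AntitoneOn θ (Ioi 0))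
    (hk : ∀ r r' : ℝ, r ≠ 0 → r' ≠ 0 → |k r - k r'| ≤ C * θ (min |r| |r'|) * |r - r'|)
    (hρ : 0 < ρ) {r r' : ℝ} (hr : ρ ≤ |r|) (hr' : ρ ≤ |r'|) :
    |k r - k r'| ≤ C * θ ρ * |r - r'| := by
  have hmin : ρ ≤ min |r| |r'| := le_min hr hr'
  calc |k r - k r'| ≤ C * θ (min |r| |r'|) * |r - r'| :=
        hk r r' (abs_pos.mp (hρ.trans_le hr)) (abs_pos.mp (hρ.trans_le hr'))
    _ ≤ C * θ ρ * |r - r'| := by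
        gcongr
        exact hθ hρ (hρ.trans_le hmin) hmin

lemma sum_geom_mul_le_setIntegral_Ioi (hε0 : 0 < ε) (hε1 : ε < 1) (hρ : 0 < ρ)
    (hθ : AntitoneOn θ (Ioi 0)) (hθ_nonneg : ∀ u, 0 < u → 0 ≤ θ u)
    (hθ_int : IntegrableOn θ (Ioi (ρ * ε))) (N : ℕ) :
    ∑ n ∈ range N, ρ / ε ^ n * (1 - ε) * θ (ρ / ε ^ n) ≤ ∫ u in Ioi (ρ * ε), θ u := by
  set x : ℕ → ℝ := fun n => ρ * ε * ε⁻¹ ^ n with hx_def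
  have hx0 : x 0 = ρ * ε := by simp [hx_def]
  have hx0_pos : 0 < x 0 := hx0 ▸ mul_pos hρ hε0
  have hx_succ : ∀ n, x (n + 1) = ρ / ε ^ n := fun n => by
    simp only [hx_def, pow_succ, inv_pow]; field_simp
  have hx_sub : ∀ n, x (n + 1) - x n = ρ / ε ^ n * (1 - ε) := fun n => by
    simp only [hx_def, pow_succ, inv_pow]; field_simp
  have hx_mono : Monotone x := fun m n hmn => by
    have := pow_right_mono₀ (one_le_inv₀ hε0 |>.mpr hε1.le) hmn
    simp only [hx_def]; gcongr
  calc ∑ n ∈ range N, ρ / ε ^ n * (1 - ε) * θ (ρ / ε ^ n)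
      = ∑ n ∈ range N, (x (n + 1) - x n) * θ (x (n + 1)) :=
        sum_congr rfl fun n _ => by rw [hx_sub, hx_succ]
    _ ≤ ∫ u in Ioi (x 0), θ u :=
        (hθ.mono (Ici_subset_Ioi.mpr hx0_pos)).sum_sub_mul_le_setIntegral_Ioi hx_mono
          (fun u hu => hθ_nonneg u (hx0_pos.trans hu)) (hx0 ▸ hθ_int) N
    _ = ∫ u in Ioi (ρ * ε), θ u := by rw [hx0]

lemma sum_range_abs_sub_div_pow_le (hε0 : 0 < ε) (hε1 : ε < 1) (hC : 0 ≤ C)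
    (hθ : AntitoneOn θ (Ioi 0)) (hθ_nonneg : ∀ u, 0 < u → 0 ≤ θ u)
    (hθ_int : IntegrableOn θ (Ioi (ρ * ε)))
    (hk : ∀ r r' : ℝ, r ≠ 0 → r' ≠ 0 → |k r - k r'| ≤ C * θ (min |r| |r'|) * |r - r'|)
    (hρ : 0 < ρ) {r r' : ℝ} (hr : ρ < |r|) (hr' : ρ < |r'|) (N : ℕ) :
    ∑ n ∈ range N, |k (r / ε ^ n) - k (r' / ε ^ n)| ≤
      C / (ρ * ε * Real.log (1 / ε)) * |r - r'| * ∫ u in Ioi (ρ * ε), θ u := by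
  have hlog : 0 < Real.log (1 / ε) := Real.log_pos (by rw [lt_div_iff₀ hε0]; linarith)
  have hL : 0 ≤ ∫ u in Ioi (ρ * ε), θ u :=
    setIntegral_nonneg measurableSet_Ioi fun u hu => hθ_nonneg u ((mul_pos hρ hε0).trans hu)
  have hterm : ∀ n, |k (r / ε ^ n) - k (r' / ε ^ n)| ≤
      C * |r - r'| / (ρ * (1 - ε)) * (ρ / ε ^ n * (1 - ε) * θ (ρ / ε ^ n)) := fun n => by
    have hεn : 0 < ε ^ n := pow_pos hε0 n
    have hscale : ∀ s, ρ < |s| → ρ / ε ^ n ≤ |s / ε ^ n| := fun s hs => by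
      rw [abs_div, abs_of_pos hεn]; gcongr
    calc |k (r / ε ^ n) - k (r' / ε ^ n)|
        ≤ C * θ (ρ / ε ^ n) * |r / ε ^ n - r' / ε ^ n| :=
          abs_sub_le_of_le_abs hC hθ hk (by positivity) (hscale r hr) (hscale r' hr')
      _ = C * |r - r'| / (ρ * (1 - ε)) * (ρ / ε ^ n * (1 - ε) * θ (ρ / ε ^ n)) := by
          rw [← sub_div, abs_div, abs_of_pos hεn]
          field_simp [(sub_pos.mpr hε1).ne']
  have hle : ρ * ε * Real.log (1 / ε) ≤ ρ * (1 - ε) := by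
    rw [mul_assoc]; exact mul_le_mul_of_nonneg_left (mul_log_one_div_le_one_sub hε0) hρ.le
  calc ∑ n ∈ range N, |k (r / ε ^ n) - k (r' / ε ^ n)|
      ≤ C * |r - r'| / (ρ * (1 - ε)) * ∑ n ∈ range N, ρ / ε ^ n * (1 - ε) * θ (ρ / ε ^ n) := by
        rw [mul_sum]; exact sum_le_sum fun n _ => hterm n
    _ ≤ C * |r - r'| / (ρ * (1 - ε)) * ∫ u in Ioi (ρ * ε), θ u := by
        gcongr
        exact sum_geom_mul_le_setIntegral_Ioi hε0 hε1 hρ hθ hθ_nonneg hθ_int N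
    _ ≤ C * |r - r'| / (ρ * ε * Real.log (1 / ε)) * ∫ u in Ioi (ρ * ε), θ u := by
        gcongr
    _ = C / (ρ * ε * Real.log (1 / ε)) * |r - r'| * ∫ u in Ioi (ρ * ε), θ u := by
        rw [div_mul_eq_mul_div C]

end

/-- Lipschitz bound for the series `K^ε(r) = ∑ k(r/ε^n)` on `{|r| > ρ}`. -/
theorem stmt2 (ε C : ℝ) (hε : ε ∈ Ioo (0 : ℝ) 1) (hC : 0 ≤ C)
    (θ : ℝ → ℝ)
    (hθ_nonneg : ∀ x : ℝ, 0 < x → 0 ≤ θ x)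
    (hθ_mono : ∀ x y : ℝ, 0 < x → x ≤ y → θ y ≤ θ x)
    (hθ_int : ∀ a : ℝ, 0 < a → IntegrableOn θ (Ioi a))
    (k : ℝ → ℝ)
    (hk_lip : ∀ r r' : ℝ, r ≠ 0 → r' ≠ 0 →
      |k r - k r'| ≤ C * θ (min |r| |r'|) * |r - r'|) :
    ∀ ρ : ℝ, 0 < ρ → ∀ r r' : ℝ, ρ < |r| → ρ < |r'| →
      Summable (fun n : ℕ => |k (r / ε ^ n) - k (r' / ε ^ n)|) ∧
      (∑' n : ℕ, |k (r / ε ^ n) - k (r' / ε ^ n)|) ≤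
        (C / (ρ * ε * Real.log (1 / ε))) * |r - r'| * ∫ u in Ioi (ρ * ε), θ u ∧
      ((∀ s : ℝ, ρ < |s| → Summable (fun n : ℕ => k (s / ε ^ n))) →
        |(∑' n : ℕ, k (r / ε ^ n)) - ∑' n : ℕ, k (r' / ε ^ n)| ≤
          (C / (ρ * ε * Real.log (1 / ε))) * |r - r'| * ∫ u in Ioi (ρ * ε), θ u) := by
  intro ρ hρ r r' hr hr'
  have hθ : AntitoneOn θ (Ioi 0) := fun x hx y _ hxy => hθ_mono x y hx hxy
  have hpartial := sum_range_abs_sub_div_pow_le hε.1 hε.2 hC hθ hθ_nonneg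
    (hθ_int _ (mul_pos hρ hε.1)) hk_lip hρ hr hr'
  have hsummable := summable_of_sum_range_le (fun _ => abs_nonneg _) hpartial
  have htsum := Real.tsum_le_of_sum_range_le (fun _ => abs_nonneg _) hpartial
  refine ⟨hsummable, htsum, fun hK => ?_⟩
  rw [← (hK r hr).tsum_sub (hK r' hr')]
  exact (norm_tsum_le_tsum_norm (f := fun n => k (r / ε ^ n) - k (r' / ε ^ n)) hsummable).trans
    htsum
end

section
/- Let ε ∈ (0,1), C ≥ 0, and θ : (0,∞) → [0,∞) be nonincreasing with ∫₁^∞ θ(u)·ln u du < ∞ and ∫_a^∞ θ(u) du < ∞ for every a > 0. Let k : ℝ → ℝ satisfy |k(r)| ≤ C ∫_{|r|}^∞ θ(u) du for all r ≠ 0, and define K^ε(r) = ∑_{n=0}^∞ k(r/ε^n) for r ≠ 0. Then sup_{|r| ≥ d} |K^ε(r)| → 0 as d → ∞; more precisely, for every d with ε·d ≥ 1, sup_{|r| ≥ d} |K^ε(r)| ≤ (C/ln(1/ε)) ∫_{εd}^∞ θ(u)·ln u du. -/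
/-!
Put `L = log (1/ε)` and `aₙ = |r| / εⁿ`, so `log aₙ = log |r| + nL ≥ (n + 1) L` once `ε|r| ≥ 1`.
Bounding each term by `C ∫_{aₙ}^∞ θ` and exchanging sum and integral,
`∑ₙ ∫_{aₙ}^∞ θ = ∫_{|r|}^∞ θ(u) · #{n : aₙ < u} du`, and the count is at most `log u / L`
because `(n + 1) L < log u` for every `n` it counts. This gives
`|K^ε(r)| ≤ (C/L) ∫_{|r|}^∞ θ(u) log u du`, whose right side decreases to `0` as `|r| → ∞`.
-/

open MeasureTheory Filter Set Topology

lemma card_filter_div_pow_lt_le_log {ε b u : ℝ} (hε0 : 0 < ε) (hε1 : ε < 1) (hb : 1 ≤ ε * b)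
    (hu : 1 ≤ u) (N : ℕ) :
    (((Finset.range N).filter fun n => b / ε ^ n < u).card : ℝ) ≤
      Real.log u / Real.log (1 / ε) := by
  have hL : 0 < Real.log (1 / ε) := Real.log_pos (one_lt_one_div hε0 hε1)
  have hb0 : 0 < b := pos_of_mul_pos_right (one_pos.trans_le hb) hε0.le
  have hlog_b : Real.log (1 / ε) ≤ Real.log b :=
    Real.log_le_log (by positivity) (by rw [div_le_iff₀ hε0]; linarith)
  have hx : 0 ≤ Real.log u / Real.log (1 / ε) := div_nonneg (Real.log_nonneg hu) hL.le
  have hsub : (Finset.range N).filter (fun n => b / ε ^ n < u) ⊆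
      Finset.range ⌊Real.log u / Real.log (1 / ε)⌋₊ := by
    intro n hn
    rw [Finset.mem_filter] at hn
    have hlog_an : Real.log (b / ε ^ n) = Real.log b + n * Real.log (1 / ε) := by
      rw [div_eq_mul_one_div, ← one_div_pow, Real.log_mul hb0.ne' (by positivity),
        Real.log_pow]
    have hlt : Real.log (b / ε ^ n) < Real.log u :=
      Real.log_lt_log (div_pos hb0 (pow_pos hε0 n)) hn.2
    rw [Finset.mem_range, ← Nat.add_one_le_iff, Nat.le_floor_iff hx, le_div_iff₀ hL]
    push_cast
    nlinarith
  calc (((Finset.range N).filter fun n => b / ε ^ n < u).card : ℝ)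
      ≤ ⌊Real.log u / Real.log (1 / ε)⌋₊ := by
        exact_mod_cast (Finset.card_le_card hsub).trans_eq (Finset.card_range _)
    _ ≤ Real.log u / Real.log (1 / ε) := Nat.floor_le hx

lemma sum_range_setIntegral_Ioi_div_pow_le {f : ℝ → ℝ} {ε b : ℝ} (hε0 : 0 < ε) (hε1 : ε < 1)
    (hb : 1 ≤ ε * b) (hf0 : ∀ u ∈ Ioi b, 0 ≤ f u) (hf : IntegrableOn f (Ioi b))
    (hf_log : IntegrableOn (fun u => f u * Real.log u) (Ioi b)) (N : ℕ) :
    ∑ n ∈ Finset.range N, ∫ u in Ioi (b / ε ^ n), f u ≤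
      (∫ u in Ioi b, f u * Real.log u) / Real.log (1 / ε) := by
  have hb1 : 1 ≤ b := by nlinarith
  have hrestrict : ∀ n : ℕ, ∫ u in Ioi (b / ε ^ n), f u =
      ∫ u in Ioi b, (Ioi (b / ε ^ n)).indicator f u := by
    intro n
    have hb_le : b ≤ b / ε ^ n :=
      le_div_self (by linarith) (pow_pos hε0 n) (pow_le_one₀ hε0.le hε1.le)
    rw [setIntegral_indicator measurableSet_Ioi, Ioi_inter_Ioi, max_eq_right hb_le]
  have hcount : ∀ u, ∑ n ∈ Finset.range N, (Ioi (b / ε ^ n)).indicator f u =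
      ((Finset.range N).filter fun n => b / ε ^ n < u).card * f u := by
    intro u
    simp [Set.indicator_apply, Finset.sum_ite]
  have hf_ind : ∀ n ∈ Finset.range N, Integrable ((Ioi (b / ε ^ n)).indicator f)
      (volume.restrict (Ioi b)) := fun n _ => hf.indicator measurableSet_Ioi
  simp_rw [hrestrict]
  rw [← integral_finsetSum _ hf_ind, ← integral_div]
  refine setIntegral_mono_on (integrable_finsetSum _ hf_ind) (hf_log.div_const _)
    measurableSet_Ioi fun u hu => ?_
  rw [hcount, mul_comm (f u), mul_div_right_comm]
  exact mul_le_mul_of_nonneg_right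
    (card_filter_div_pow_lt_le_log hε0 hε1 hb (hb1.trans hu.le) N) (hf0 u hu)

lemma abs_tsum_comp_div_pow_le {k f : ℝ → ℝ} {ε C r : ℝ} (hε0 : 0 < ε) (hε1 : ε < 1)
    (hC : 0 ≤ C) (hr : 1 ≤ ε * |r|) (hf0 : ∀ u ∈ Ioi |r|, 0 ≤ f u)
    (hf : IntegrableOn f (Ioi |r|)) (hf_log : IntegrableOn (fun u => f u * Real.log u) (Ioi |r|))
    (hk : ∀ x : ℝ, x ≠ 0 → |k x| ≤ C * ∫ u in Ioi |x|, f u) :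
    |∑' n : ℕ, k (r / ε ^ n)| ≤ C / Real.log (1 / ε) * ∫ u in Ioi |r|, f u * Real.log u := by
  have hr0 : r ≠ 0 := abs_pos.mp (pos_of_mul_pos_right (one_pos.trans_le hr) hε0.le)
  have hk_n : ∀ n : ℕ, |k (r / ε ^ n)| ≤ C * ∫ u in Ioi (|r| / ε ^ n), f u := fun n => by
    have hn := pow_pos hε0 n
    simpa [abs_div, abs_of_pos hn] using hk _ (div_ne_zero hr0 hn.ne')
  have hT0 : ∀ n : ℕ, 0 ≤ ∫ u in Ioi (|r| / ε ^ n), f u := fun n =>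
    setIntegral_nonneg measurableSet_Ioi fun u hu =>
      hf0 u ((le_div_self (abs_nonneg r) (pow_pos hε0 n) (pow_le_one₀ hε0.le hε1.le)).trans_lt hu)
  have hpartial := sum_range_setIntegral_Ioi_div_pow_le hε0 hε1 hr hf0 hf hf_log
  calc |∑' n : ℕ, k (r / ε ^ n)|
      ≤ ∑' n : ℕ, C * ∫ u in Ioi (|r| / ε ^ n), f u := by
        rw [← Real.norm_eq_abs]
        exact tsum_of_norm_bounded ((summable_of_sum_range_le hT0 hpartial).mul_left C).hasSum hk_n
    _ = C * ∑' n : ℕ, ∫ u in Ioi (|r| / ε ^ n), f u := tsum_mul_left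
    _ ≤ C * ((∫ u in Ioi |r|, f u * Real.log u) / Real.log (1 / ε)) :=
        mul_le_mul_of_nonneg_left (Real.tsum_le_of_sum_range_le hT0 hpartial) hC
    _ = C / Real.log (1 / ε) * ∫ u in Ioi |r|, f u * Real.log u := by ring

lemma tendsto_setIntegral_Ioi_atTop_zero {f : ℝ → ℝ} {a : ℝ} (hf : IntegrableOn f (Ioi a)) :
    Tendsto (fun A => ∫ u in Ioi A, f u) atTop (𝓝 0) := by
  have h := tendsto_setIntegral_of_antitone (fun A : ℝ => measurableSet_Ioi)
    (fun _ _ h => Ioi_subset_Ioi h) ⟨a, hf⟩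
  have hempty : ⋂ A : ℝ, Ioi A = ∅ :=
    eq_empty_of_forall_notMem fun x hx => lt_irrefl x (mem_iInter.mp hx x)
  rwa [hempty, setIntegral_empty] at h

theorem stmt3_general (ε C : ℝ) (hε : ε ∈ Ioo (0 : ℝ) 1) (hC : 0 ≤ C)
    (θ : ℝ → ℝ)
    (hθ_nonneg : ∀ x : ℝ, 0 < x → 0 ≤ θ x)
    (hθ_logint : IntegrableOn (fun u => θ u * Real.log u) (Ioi (1 : ℝ)))
    (hθ_int : ∀ a : ℝ, 0 < a → IntegrableOn θ (Ioi a))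
    (k : ℝ → ℝ)
    (hk : ∀ r : ℝ, r ≠ 0 → |k r| ≤ C * ∫ u in Ioi |r|, θ u) :
    (∀ η : ℝ, 0 < η → ∃ D : ℝ, ∀ r : ℝ, D ≤ |r| →
      |∑' n : ℕ, k (r / ε ^ n)| ≤ η) ∧
    (∀ d : ℝ, 1 ≤ ε * d → ∀ r : ℝ, d ≤ |r| →
      |∑' n : ℕ, k (r / ε ^ n)| ≤
        (C / Real.log (1 / ε)) * ∫ u in Ioi (ε * d), θ u * Real.log u) := by
  obtain ⟨hε0, hε1⟩ := hε
  have hL : 0 < Real.log (1 / ε) := Real.log_pos (one_lt_one_div hε0 hε1)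
  have bound : ∀ d : ℝ, 1 ≤ ε * d → ∀ r : ℝ, d ≤ |r| →
      |∑' n : ℕ, k (r / ε ^ n)| ≤
        (C / Real.log (1 / ε)) * ∫ u in Ioi (ε * d), θ u * Real.log u := by
    intro d hd r hr
    have hεd_r : ε * d ≤ |r| := by nlinarith
    have hr0 : 0 < |r| := by nlinarith
    calc |∑' n : ℕ, k (r / ε ^ n)|
        ≤ C / Real.log (1 / ε) * ∫ u in Ioi |r|, θ u * Real.log u :=
          abs_tsum_comp_div_pow_le hε0 hε1 hC (hd.trans (by gcongr))
            (fun u hu => hθ_nonneg u (hr0.trans hu)) (hθ_int _ hr0)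
            (hθ_logint.mono_set (Ioi_subset_Ioi (hd.trans hεd_r))) hk
      _ ≤ C / Real.log (1 / ε) * ∫ u in Ioi (ε * d), θ u * Real.log u := by
          have hθ_log_nonneg : ∀ u ∈ Ioi (ε * d), 0 ≤ θ u * Real.log u := fun u hu =>
            mul_nonneg (hθ_nonneg u (by linarith [hu.out])) (Real.log_nonneg (hd.trans hu.out.le))
          refine mul_le_mul_of_nonneg_left ?_ (div_nonneg hC hL.le)
          exact setIntegral_mono_set (hθ_logint.mono_set (Ioi_subset_Ioi hd))
            (ae_restrict_of_forall_mem measurableSet_Ioi hθ_log_nonneg)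
            (Ioi_subset_Ioi hεd_r).eventuallyLE
  refine ⟨fun η hη => ?_, bound⟩
  obtain ⟨A, hA_lt, hA_one⟩ := ((((tendsto_setIntegral_Ioi_atTop_zero hθ_logint).const_mul
    (C / Real.log (1 / ε))).eventually_lt_const (by simpa using hη)).and
    (eventually_ge_atTop 1)).exists
  refine ⟨A / ε, fun r hr => (bound (A / ε) ?_ r hr).trans ?_⟩
  · rwa [mul_div_cancel₀ _ hε0.ne']
  · rw [mul_div_cancel₀ _ hε0.ne']
    exact hA_lt.le

/-- Lemma 8: decay of `K^ε(r) = ∑ k(r/ε^n)` at infinity, with the explicit bound. -/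
theorem stmt3 (ε C : ℝ) (hε : ε ∈ Ioo (0 : ℝ) 1) (hC : 0 ≤ C)
    (θ : ℝ → ℝ)
    (hθ_nonneg : ∀ x : ℝ, 0 < x → 0 ≤ θ x)
    (hθ_mono : ∀ x y : ℝ, 0 < x → x ≤ y → θ y ≤ θ x)
    (hθ_logint : IntegrableOn (fun u => θ u * Real.log u) (Ioi (1 : ℝ)))
    (hθ_int : ∀ a : ℝ, 0 < a → IntegrableOn θ (Ioi a))
    (k : ℝ → ℝ)
    (hk : ∀ r : ℝ, r ≠ 0 → |k r| ≤ C * ∫ u in Ioi |r|, θ u) :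
    (∀ η : ℝ, 0 < η → ∃ D : ℝ, ∀ r : ℝ, D ≤ |r| →
      |∑' n : ℕ, k (r / ε ^ n)| ≤ η) ∧
    (∀ d : ℝ, 1 ≤ ε * d → ∀ r : ℝ, d ≤ |r| →
      |∑' n : ℕ, k (r / ε ^ n)| ≤
        (C / Real.log (1 / ε)) * ∫ u in Ioi (ε * d), θ u * Real.log u) :=
  stmt3_general ε C hε hC θ hθ_nonneg hθ_logint hθ_int k hk
end

section
/- Let ε ∈ (0,1), C ≥ 0, and θ : (0,∞) → [0,∞) be nonincreasing with ∫₁^∞ θ(u)·ln u du < ∞ and ∫_a^∞ θ(u) du < ∞ for every a > 0. Let k : ℝ → ℝ be continuous at 0 and satisfy |k(r)| ≤ C ∫_{|r|}^∞ θ(u) du for all r ≠ 0, and define K^ε(r) = ∑_{n=0}^∞ k(r/ε^n) for r ≠ 0. Then K^ε(r) / ln(1/r) → k(0)/ln(1/ε) as r → 0⁺. -/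
/-!
Put `L = ln(1/ε)`. Fix `a > 0` so small that `k ≈ k 0` on `(0, a]`, and split the series at the
first index `N` with `r / ε ^ N > a`, so that `N = ln(a/r)/L + O(1) = ln(1/r)/L + O_a(1)`.
The first `N` terms contribute `N k(0) + N·o(1)`. The remaining ones are bounded, uniformly in `r`,
by `C ∑ₘ ∫_{a/εᵐ}^∞ θ`: this series converges because a point `u > a` lies in at most
`ln(u/a)/L + 1` of the intervals `(a/εᵐ, ∞)`, and `θ(u) ln u` is integrable at infinity.
-/

open MeasureTheory Filter Set Topology

lemma div_pow_le_iff_le_log_div {ε r a : ℝ} (hε0 : 0 < ε) (hε1 : ε < 1) (hr : 0 < r)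
    (ha : 0 < a) (n : ℕ) :
    r / ε ^ n ≤ a ↔ (n : ℝ) ≤ Real.log (a / r) / Real.log (1 / ε) := by
  have hL : 0 < Real.log (1 / ε) := Real.log_pos (one_lt_one_div hε0 hε1)
  rw [le_div_iff₀ hL, ← Real.log_pow, Real.log_le_log_iff (by positivity) (by positivity),
    one_div_pow, le_div_iff₀ hr, mul_comm, ← div_eq_mul_one_div, div_le_iff₀ (by positivity)]

lemma card_filter_div_pow_lt_le {ε a u : ℝ} (hε0 : 0 < ε) (hε1 : ε < 1) (ha : 0 < a)
    (hau : a < u) (M : ℕ) :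
    (((Finset.range M).filter fun m => a / ε ^ m < u).card : ℝ)
      ≤ Real.log (u / a) / Real.log (1 / ε) + 1 := by
  set x := Real.log (u / a) / Real.log (1 / ε)
  have hx : 0 ≤ x := div_nonneg (Real.log_nonneg ((one_le_div ha).2 hau.le))
    (Real.log_nonneg (one_le_one_div hε0 hε1.le))
  have hsub : (Finset.range M).filter (fun m => a / ε ^ m < u) ⊆ Finset.range (⌊x⌋₊ + 1) := by
    intro m hm
    have hm' := ((div_pow_le_iff_le_log_div hε0 hε1 ha (ha.trans hau) m).1
      (Finset.mem_filter.1 hm).2.le)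
    exact Finset.mem_range.2 (Nat.lt_succ_of_le (Nat.le_floor hm'))
  calc _ ≤ ((⌊x⌋₊ + 1 : ℕ) : ℝ) := by
        exact_mod_cast (Finset.card_le_card hsub).trans (Finset.card_range _).le
    _ ≤ x + 1 := by push_cast; linarith [Nat.floor_le hx]

lemma integrableOn_mul_log_Ioi {θ : ℝ → ℝ} {a : ℝ} (ha : 0 < a)
    (hθ_int : IntegrableOn θ (Ioi a))
    (hθ_logint : IntegrableOn (fun u => θ u * Real.log u) (Ioi 1)) :
    IntegrableOn (fun u => θ u * Real.log u) (Ioi a) := by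
  refine IntegrableOn.mono_set ?_ (Ioi_subset_Ioc_union_Ioi (b := 1))
  refine IntegrableOn.union ?_ hθ_logint
  refine (hθ_int.mono_set Ioc_subset_Ioi_self).mul_bdd
    Real.measurable_log.aestronglyMeasurable.restrict (c := |Real.log a|) ?_
  filter_upwards [ae_restrict_mem measurableSet_Ioc] with u hu
  rw [Real.norm_eq_abs, abs_of_nonpos (Real.log_nonpos (ha.trans hu.1).le hu.2),
    le_abs, neg_le_neg_iff]
  exact Or.inr (Real.log_le_log ha hu.1.le)

lemma summable_setIntegral_Ioi_div_pow {θ : ℝ → ℝ} {ε a : ℝ} (hε0 : 0 < ε) (hε1 : ε < 1)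
    (ha : 0 < a) (hθ_nonneg : ∀ x, 0 < x → 0 ≤ θ x) (hθ_int : IntegrableOn θ (Ioi a))
    (hθ_logint : IntegrableOn (fun u => θ u * Real.log u) (Ioi 1)) :
    Summable fun m : ℕ => ∫ u in Ioi (a / ε ^ m), θ u := by
  set L := Real.log (1 / ε)
  set w : ℝ → ℝ := fun u => Real.log (u / a) / L + 1
  have hsub : ∀ m : ℕ, Ioi (a / ε ^ m) ⊆ Ioi a := fun m =>
    Ioi_subset_Ioi (le_div_self ha.le (by positivity) (pow_le_one₀ hε0.le hε1.le))
  have hθw : IntegrableOn (fun u => θ u * w u) (Ioi a) := by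
    refine IntegrableOn.congr_fun (((integrableOn_mul_log_Ioi ha hθ_int hθ_logint).div_const L).add
      (hθ_int.mul_const (1 - Real.log a / L))) (fun u hu => ?_) measurableSet_Ioi
    simp only [w, Pi.add_apply, Real.log_div (ha.trans hu).ne' ha.ne']
    ring
  refine summable_of_sum_range_le (c := ∫ u in Ioi a, θ u * w u) (fun m =>
    setIntegral_nonneg measurableSet_Ioi fun u hu =>
      hθ_nonneg u ((div_pos ha (pow_pos hε0 m)).trans hu))
    fun M => ?_
  calc ∑ m ∈ Finset.range M, ∫ u in Ioi (a / ε ^ m), θ u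
      = ∫ u in Ioi a, ∑ m ∈ Finset.range M, (Ioi (a / ε ^ m)).indicator θ u := by
        rw [integral_finsetSum _ fun m _ => hθ_int.indicator measurableSet_Ioi]
        refine Finset.sum_congr rfl fun m _ => ?_
        rw [setIntegral_indicator measurableSet_Ioi, inter_eq_right.2 (hsub m)]
    _ ≤ ∫ u in Ioi a, θ u * w u := by
        refine setIntegral_mono_on (integrable_finsetSum _ fun m _ =>
          hθ_int.indicator measurableSet_Ioi) hθw measurableSet_Ioi fun u hu => ?_
        simp only [indicator_apply, mem_Ioi, ← Finset.sum_filter, Finset.sum_const, nsmul_eq_mul]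
        rw [mul_comm]
        exact mul_le_mul_of_nonneg_left (card_filter_div_pow_lt_le hε0 hε1 ha hu M)
          (hθ_nonneg u (ha.trans hu))

lemma antitoneOn_setIntegral_Ioi {θ : ℝ → ℝ} (hθ_nonneg : ∀ x, 0 < x → 0 ≤ θ x)
    (hθ_int : ∀ a, 0 < a → IntegrableOn θ (Ioi a)) :
    AntitoneOn (fun x => ∫ u in Ioi x, θ u) (Ioi 0) := fun x hx _ _ hxy =>
  setIntegral_mono_set (hθ_int x hx)
    ((ae_restrict_mem measurableSet_Ioi).mono fun u hu => hθ_nonneg u (hx.out.trans hu))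
    (Ioi_subset_Ioi hxy).eventuallyLE

lemma abs_tsum_sub_nat_mul_le {f G : ℕ → ℝ} {c η : ℝ} (N : ℕ)
    (hhead : ∀ n < N, |f n - c| ≤ η) (htail : ∀ i, |f (i + N)| ≤ G i) (hG : Summable G) :
    |∑' n, f n - N * c| ≤ N * η + ∑' i, G i := by
  have hf : Summable f := (summable_nat_add_iff N).1 (hG.of_norm_bounded htail)
  have hsplit : ∑' n, f n - N * c
      = ∑ n ∈ Finset.range N, (f n - c) + ∑' i, f (i + N) := by
    rw [← hf.sum_add_tsum_nat_add N, Finset.sum_sub_distrib, Finset.sum_const,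
      Finset.card_range, nsmul_eq_mul]
    ring
  rw [hsplit]
  refine (abs_add_le _ _).trans (add_le_add ?_ ?_)
  calc |∑ n ∈ Finset.range N, (f n - c)| ≤ ∑ n ∈ Finset.range N, |f n - c| :=
        Finset.abs_sum_le_sum_abs _ _
    _ ≤ ∑ n ∈ Finset.range N, η := Finset.sum_le_sum fun n hn => hhead n (Finset.mem_range.1 hn)
    _ = N * η := by rw [Finset.sum_const, Finset.card_range, nsmul_eq_mul]
  simpa only [Real.norm_eq_abs] using
    tsum_of_norm_bounded (f := fun i => f (i + N)) hG.hasSum htail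

lemma abs_tsum_comp_div_pow_sub_le {k F : ℝ → ℝ} {ε a r η : ℝ} (hε0 : 0 < ε) (hε1 : ε < 1)
    (ha : 0 < a) (hr : 0 < r) (hra : r ≤ a)
    (hkF : ∀ x, 0 < x → |k x| ≤ F x) (hF : AntitoneOn F (Ioi 0))
    (hFsum : Summable fun m : ℕ => F (a / ε ^ m))
    (hk : ∀ x, 0 < x → x ≤ a → |k x - k 0| ≤ η) :
    |∑' n : ℕ, k (r / ε ^ n) - Real.log (1 / r) / Real.log (1 / ε) * k 0|
      ≤ (Real.log (1 / r) / Real.log (1 / ε) + (1 + |Real.log a| / Real.log (1 / ε))) * η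
        + ∑' m : ℕ, F (a / ε ^ m) + |k 0| * (1 + |Real.log a| / Real.log (1 / ε)) := by
  set L := Real.log (1 / ε)
  set ℓ := Real.log (1 / r)
  set B := 1 + |Real.log a| / L
  have hL : 0 < L := Real.log_pos (one_lt_one_div hε0 hε1)
  have hη : 0 ≤ η := (abs_nonneg _).trans (hk a ha le_rfl)
  set x := Real.log (a / r) / L
  have hx : x = ℓ / L + Real.log a / L := by
    simp only [x, ℓ, Real.log_div ha.ne' hr.ne', one_div, Real.log_inv]
    ring
  have hx0 : 0 ≤ x := by
    simpa only [Nat.cast_zero] using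
      (div_pow_le_iff_le_log_div hε0 hε1 hr ha 0).1 (by rwa [pow_zero, div_one])
  set N := ⌊x⌋₊ + 1
  have hxN : x < N := by simpa only [N, Nat.cast_add, Nat.cast_one] using Nat.lt_floor_add_one x
  have hNx : (N : ℝ) ≤ x + 1 := by
    simp only [N, Nat.cast_add, Nat.cast_one]
    linarith [Nat.floor_le hx0]
  have hhead : ∀ n < N, |k (r / ε ^ n) - k 0| ≤ η := fun n hn =>
    hk _ (by positivity) ((div_pow_le_iff_le_log_div hε0 hε1 hr ha n).2
      ((Nat.le_floor_iff hx0).1 (Nat.lt_succ_iff.1 hn)))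
  have haN : a < r / ε ^ N := by
    rw [← not_le, div_pow_le_iff_le_log_div hε0 hε1 hr ha, not_le]
    exact hxN
  have htail : ∀ i, |k (r / ε ^ (i + N))| ≤ F (a / ε ^ i) := by
    intro i
    refine (hkF _ (by positivity)).trans (hF (by positivity : 0 < a / ε ^ i)
      (by positivity : 0 < r / ε ^ (i + N)) ?_)
    rw [pow_add, div_mul_eq_div_div_swap]
    exact div_le_div_of_nonneg_right haN.le (by positivity)
  have hNB : |(N : ℝ) - ℓ / L| ≤ B := by
    have hlog : |Real.log a / L| = |Real.log a| / L := by rw [abs_div, abs_of_pos hL]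
    obtain ⟨hlo, hhi⟩ := abs_le.1 hlog.le
    rw [abs_le]
    constructor <;> linarith
  calc |∑' n : ℕ, k (r / ε ^ n) - ℓ / L * k 0|
      = |(∑' n : ℕ, k (r / ε ^ n) - N * k 0) + (N - ℓ / L) * k 0| := by ring_nf
    _ ≤ (N * η + ∑' m : ℕ, F (a / ε ^ m)) + |k 0| * B := by
        refine (abs_add_le _ _).trans (add_le_add (abs_tsum_sub_nat_mul_le N hhead htail hFsum) ?_)
        rw [abs_mul, mul_comm]
        exact mul_le_mul_of_nonneg_left hNB (abs_nonneg _)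
    _ ≤ (ℓ / L + B) * η + ∑' m : ℕ, F (a / ε ^ m) + |k 0| * B := by
        gcongr
        linarith [le_abs_self ((N : ℝ) - ℓ / L)]

lemma tendsto_div_of_forall_abs_sub_mul_le {α : Type*} {l : Filter α} {S ℓ : α → ℝ} {c : ℝ}
    (hℓ : Tendsto ℓ l atTop) (h : ∀ η > 0, ∃ E, ∀ᶠ x in l, |S x - c * ℓ x| ≤ η * ℓ x + E) :
    Tendsto (fun x => S x / ℓ x) l (𝓝 c) := by
  rw [Metric.tendsto_nhds]
  intro δ hδ
  obtain ⟨E, hE⟩ := h (δ / 2) (half_pos hδ)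
  filter_upwards [hE, hℓ.eventually_gt_atTop (max 0 (2 * E / δ))] with x hx hℓx
  have hℓ0 : 0 < ℓ x := (le_max_left _ _).trans_lt hℓx
  have hEℓ : E < δ / 2 * ℓ x := by
    have := (le_max_right _ _).trans_lt hℓx
    rw [div_lt_iff₀ hδ] at this
    linarith
  rw [Real.dist_eq, div_sub' hℓ0.ne', abs_div, abs_of_pos hℓ0, div_lt_iff₀ hℓ0, mul_comm (ℓ x)]
  linarith

lemma tendsto_log_one_div_nhdsGT_zero :
    Tendsto (fun r : ℝ => Real.log (1 / r)) (𝓝[>] 0) atTop := by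
  simp only [one_div, Real.log_inv]
  exact tendsto_neg_atBot_atTop.comp Real.tendsto_log_nhdsGT_zero

theorem stmt4_general (ε C : ℝ) (hε : ε ∈ Ioo (0 : ℝ) 1) (hC : 0 ≤ C)
    (θ : ℝ → ℝ)
    (hθ_nonneg : ∀ x : ℝ, 0 < x → 0 ≤ θ x)
    (hθ_logint : IntegrableOn (fun u => θ u * Real.log u) (Ioi (1 : ℝ)))
    (hθ_int : ∀ a : ℝ, 0 < a → IntegrableOn θ (Ioi a))
    (k : ℝ → ℝ) (hk0 : ContinuousAt k 0)
    (hk : ∀ r : ℝ, r ≠ 0 → |k r| ≤ C * ∫ u in Ioi |r|, θ u) :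
    Tendsto (fun r : ℝ => (∑' n : ℕ, k (r / ε ^ n)) / Real.log (1 / r))
      (nhdsWithin 0 (Ioi 0)) (nhds (k 0 / Real.log (1 / ε))) := by
  obtain ⟨hε0, hε1⟩ := hε
  set L := Real.log (1 / ε)
  have hL : 0 < L := Real.log_pos (one_lt_one_div hε0 hε1)
  set F : ℝ → ℝ := fun x => C * ∫ u in Ioi x, θ u
  have hF : AntitoneOn F (Ioi 0) := fun x hx y hy hxy =>
    mul_le_mul_of_nonneg_left (antitoneOn_setIntegral_Ioi hθ_nonneg hθ_int hx hy hxy) hC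
  refine tendsto_div_of_forall_abs_sub_mul_le tendsto_log_one_div_nhdsGT_zero fun η hη => ?_
  obtain ⟨δ, hδ, hkδ⟩ := Metric.continuousAt_iff.1 hk0 (η * L) (by positivity)
  have hka : ∀ x, 0 < x → x ≤ δ / 2 → |k x - k 0| ≤ η * L := fun x hx hxδ =>
    (hkδ (by rw [Real.dist_eq, sub_zero, abs_of_pos hx]; linarith)).le
  have hFsum : Summable fun m : ℕ => F (δ / 2 / ε ^ m) :=
    (summable_setIntegral_Ioi_div_pow hε0 hε1 (half_pos hδ) hθ_nonneg (hθ_int _ (half_pos hδ))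
      hθ_logint).mul_left C
  set B := 1 + |Real.log (δ / 2)| / L
  refine ⟨B * η * L + ∑' m : ℕ, F (δ / 2 / ε ^ m) + |k 0| * B, ?_⟩
  filter_upwards [Ioc_mem_nhdsGT (half_pos hδ)] with r ⟨hr, hrδ⟩
  calc |∑' n : ℕ, k (r / ε ^ n) - k 0 / L * Real.log (1 / r)|
      = |∑' n : ℕ, k (r / ε ^ n) - Real.log (1 / r) / L * k 0| := by rw [div_mul_comm]
    _ ≤ (Real.log (1 / r) / L + B) * (η * L) + ∑' m : ℕ, F (δ / 2 / ε ^ m) + |k 0| * B :=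
        abs_tsum_comp_div_pow_sub_le hε0 hε1 (half_pos hδ) hr hrδ
          (fun x hx => by simpa only [abs_of_pos hx] using hk x hx.ne') hF hFsum hka
    _ = η * Real.log (1 / r) + (B * η * L + ∑' m : ℕ, F (δ / 2 / ε ^ m) + |k 0| * B) := by
        field_simp
        ring

/-- Lemma 12: logarithmic asymptotics of `K^ε` at the origin:
`K^ε(r)/ln(1/r) → k(0)/ln(1/ε)` as `r → 0⁺`. -/
theorem stmt4 (ε C : ℝ) (hε : ε ∈ Ioo (0 : ℝ) 1) (hC : 0 ≤ C)
    (θ : ℝ → ℝ)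
    (hθ_nonneg : ∀ x : ℝ, 0 < x → 0 ≤ θ x)
    (hθ_mono : ∀ x y : ℝ, 0 < x → x ≤ y → θ y ≤ θ x)
    (hθ_logint : IntegrableOn (fun u => θ u * Real.log u) (Ioi (1 : ℝ)))
    (hθ_int : ∀ a : ℝ, 0 < a → IntegrableOn θ (Ioi a))
    (k : ℝ → ℝ) (hk0 : ContinuousAt k 0)
    (hk : ∀ r : ℝ, r ≠ 0 → |k r| ≤ C * ∫ u in Ioi |r|, θ u) :
    Tendsto (fun r : ℝ => (∑' n : ℕ, k (r / ε ^ n)) / Real.log (1 / r))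
      (nhdsWithin 0 (Ioi 0)) (nhds (k 0 / Real.log (1 / ε))) :=
  stmt4_general ε C hε hC θ hθ_nonneg hθ_logint hθ_int k hk0 hk
end

section
/- Let k : ℝ → ℝ be continuous, ε ∈ (0,1), and suppose θ(x) := sup_{u ≥ x} |k(u)|/u is finite for every x > 0. Define k_ε(r) = ∫_{r}^{r/ε} k(u)/u du for r > 0. Then for all 0 < r ≤ r', |k_ε(r) − k_ε(r')| ≤ (2/ε)·θ(r)·|r − r'|. -/
open MeasureTheory Filter Set

section

variable {k : ℝ → ℝ} {a b M : ℝ}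

lemma intervalIntegrable_div_id (hk : Continuous k) (ha : 0 < a) (hb : 0 < b) :
    IntervalIntegrable (fun u => k u / u) volume a b :=
  (hk.continuousOn.div continuousOn_id fun _ hu =>
    ((lt_min ha hb).trans_le hu.1).ne').intervalIntegrable

lemma abs_intervalIntegral_div_id_le (ha : 0 < a) (hab : a ≤ b)
    (hM : ∀ u, a ≤ u → |k u| / u ≤ M) :
    |∫ u in a..b, k u / u| ≤ M * (b - a) := by
  have := intervalIntegral.norm_integral_le_of_norm_le_const (a := a) (b := b)
    (f := fun u => k u / u) fun u hu => by
      rw [uIoc_of_le hab] at hu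
      rw [Real.norm_eq_abs, abs_div, abs_of_pos (ha.trans hu.1)]
      exact hM u hu.1.le
  rwa [Real.norm_eq_abs, abs_of_nonneg (sub_nonneg.2 hab)] at this

end

/-- The Lipschitz estimate `|k_ε(r) - k_ε(r')| ≤ (2/ε)·θ(r)·|r - r'|` for
`k_ε(r) = ∫_r^{r/ε} k(u)/u du` and `θ(x) = sup_{u ≥ x} |k(u)|/u`. -/
theorem stmt8 (k : ℝ → ℝ) (hk : Continuous k) (ε : ℝ) (hε : ε ∈ Ioo (0 : ℝ) 1)
    (θ : ℝ → ℝ)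
    (hθ : ∀ x : ℝ, 0 < x → IsLUB ((fun u => |k u| / u) '' Ici x) (θ x)) :
    ∀ r r' : ℝ, 0 < r → r ≤ r' →
      |(∫ u in r..(r / ε), k u / u) - ∫ u in r'..(r' / ε), k u / u| ≤
        (2 / ε) * θ r * |r - r'| := by
  obtain ⟨hε0, hε1⟩ := hε
  intro r r' hr hrr'
  have hr' : 0 < r' := hr.trans_le hrr'
  have hbound : ∀ u, r ≤ u → |k u| / u ≤ θ r := fun u hu => (hθ r hr).1 ⟨u, hu, rfl⟩
  have hθ0 : 0 ≤ θ r := (div_nonneg (abs_nonneg _) hr.le).trans (hbound r le_rfl)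
  have hr_le : r ≤ r / ε := le_div_self hr.le hε0 hε1.le
  -- `k_ε(r) - k_ε(r')` only sees the two short intervals `[r, r']` and `[r/ε, r'/ε]`.
  rw [intervalIntegral.integral_interval_sub_interval_comm
      (intervalIntegrable_div_id hk hr (div_pos hr hε0))
      (intervalIntegrable_div_id hk hr' (div_pos hr' hε0))
      (intervalIntegrable_div_id hk hr hr'),
    abs_sub_comm r r', abs_of_nonneg (sub_nonneg.2 hrr')]
  have hnear : |∫ u in r..r', k u / u| ≤ θ r * (r' - r) :=
    abs_intervalIntegral_div_id_le hr hrr' hbound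
  have hfar : |∫ u in (r / ε)..(r' / ε), k u / u| ≤ θ r * ((r' - r) / ε) := by
    rw [sub_div]
    exact abs_intervalIntegral_div_id_le (div_pos hr hε0)
      (div_le_div_of_nonneg_right hrr' hε0.le) fun u hu => hbound u (hr_le.trans hu)
  have hshort : r' - r ≤ (r' - r) / ε := le_div_self (sub_nonneg.2 hrr') hε0 hε1.le
  calc _ ≤ |∫ u in r..r', k u / u| + |∫ u in (r / ε)..(r' / ε), k u / u| := abs_sub _ _
    _ ≤ θ r * (r' - r) + θ r * ((r' - r) / ε) := add_le_add hnear hfar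
    _ ≤ 2 / ε * θ r * (r' - r) := by
      rw [show 2 / ε * θ r * (r' - r) = 2 * (θ r * ((r' - r) / ε)) by ring]
      linarith [mul_le_mul_of_nonneg_left hshort hθ0]
end

section
/- Let k : ℝ → ℝ be continuous and even, suppose θ(x) := sup_{u ≥ x} |k(u)|/u is finite for every x > 0 and ∫₁^∞ (ln r)·θ(r) dr < ∞. For ε ∈ (0,1) define k_ε(r) = ∫_{|r|}^{|r|/ε} k(u)/u du for r ≠ 0 and k_ε(0) = k(0)·ln(1/ε). Then: (i) k_ε is continuous on ℝ; (ii) k_ε(r) → 0 as |r| → ∞; (iii) θ is nonincreasing, ∫₁^∞ θ(u)·ln u du < ∞, and |k_ε(r) − k_ε(r')| ≤ (2/ε)·θ(min(|r|,|r'|))·|r − r'| for all nonzero r, r'. -/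
/-!
Substituting `u = a e^s` turns `∫_a^{a/ε} k(u)/u du` into `∫_0^{ln(1/ε)} k(a e^s) ds`, which is
jointly continuous in `a` and equals `k(0) ln(1/ε)` at `a = 0`; hence `k_ε(r)` is a continuous
function of `|r|`. Decay follows because `|k(u)/u| ≤ θ(u) ≤ ln u · θ(u)` for `u ≥ e`, so `k_ε(r)`
is dominated by a piece of the tail of a convergent integral. For the Lipschitz bound, the
difference of two kernels is `∫_a^b - ∫_{a/ε}^{b/ε}`, and both integrands are bounded by
`θ(min(a, b))` on the ranges of integration.
-/

open MeasureTheory Filter Set Topology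

theorem integral_div_self_eq_integral_comp_mul_exp {k : ℝ → ℝ} (hk : ContinuousOn k (Ioi 0))
    {a : ℝ} (ha : 0 < a) (L : ℝ) :
    ∫ u in a..a * Real.exp L, k u / u = ∫ s in 0..L, k (a * Real.exp s) := by
  have hsubst := intervalIntegral.integral_comp_mul_deriv' (a := 0) (b := L)
    (f := fun s => a * Real.exp s) (f' := fun s => a * Real.exp s) (g := fun u => k u / u)
    (fun s _ => (Real.hasDerivAt_exp s).const_mul a) (by fun_prop)
    ((hk.div continuousOn_id fun u hu => ne_of_gt hu).mono
      (by rintro _ ⟨s, -, rfl⟩; exact mul_pos ha (Real.exp_pos s)))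
  simp only [Function.comp_apply, Real.exp_zero, mul_one] at hsubst
  rw [← hsubst]
  refine intervalIntegral.integral_congr fun s _ => ?_
  field_simp [(mul_pos ha (Real.exp_pos s)).ne']

section Tails

variable {ι E : Type*} [NormedAddCommGroup E] [NormedSpace ℝ E] {l : Filter ι} {a : ℝ}
  {b c : ι → ℝ}

theorem tendsto_intervalIntegral_of_integrableOn_Ioi {g : ℝ → E} (hg : IntegrableOn g (Ioi a))
    (hb : Tendsto b l atTop) (hc : Tendsto c l atTop) :
    Tendsto (fun i => ∫ u in b i..c i, g u) l (𝓝 0) := by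
  have hint : ∀ t, a ≤ t → IntervalIntegrable g volume a t := fun t ht =>
    (intervalIntegrable_iff_integrableOn_Ioc_of_le ht).2 (hg.mono_set Ioc_subset_Ioi_self)
  have hprim := intervalIntegral_tendsto_integral_Ioi a hg tendsto_id
  have hdiff := (hprim.comp hc).sub (hprim.comp hb)
  rw [sub_self] at hdiff
  refine hdiff.congr' ?_
  filter_upwards [hb.eventually_ge_atTop a, hc.eventually_ge_atTop a] with i hbi hci
  exact intervalIntegral.integral_interval_sub_left (hint _ hci) (hint _ hbi)

theorem tendsto_intervalIntegral_of_norm_le {f : ℝ → E} {g : ℝ → ℝ}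
    (hg : IntegrableOn g (Ioi a)) (hfg : ∀ᶠ u in atTop, ‖f u‖ ≤ g u)
    (hb : Tendsto b l atTop) (hbc : ∀ᶠ i in l, b i ≤ c i) :
    Tendsto (fun i => ∫ u in b i..c i, f u) l (𝓝 0) := by
  obtain ⟨R, hR⟩ := eventually_atTop.1 hfg
  refine squeeze_zero_norm' ?_
    (tendsto_intervalIntegral_of_integrableOn_Ioi hg hb (tendsto_atTop_mono' l hbc hb))
  filter_upwards [hbc, hb.eventually_ge_atTop (max a R)] with i hbci hbi
  refine intervalIntegral.norm_integral_le_of_norm_le hbci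
    (ae_of_all _ fun t ht => hR t ((le_max_right a R).trans (hbi.trans ht.1.le))) ?_
  refine (intervalIntegrable_iff_integrableOn_Ioc_of_le hbci).2 (hg.mono_set ?_)
  exact fun t ht => (le_max_left a R).trans_lt (hbi.trans_lt ht.1)

theorem tendsto_intervalIntegral_abs_abs_div_cocompact {f g : ℝ → ℝ} {ε : ℝ}
    (hg : IntegrableOn g (Ioi a)) (hfg : ∀ᶠ u in atTop, |f u| ≤ g u) (hε0 : 0 < ε)
    (hε1 : ε ≤ 1) : Tendsto (fun r => ∫ u in |r|..|r| / ε, f u) (cocompact ℝ) (𝓝 0) :=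
  tendsto_intervalIntegral_of_norm_le hg hfg
    (tendsto_norm_cocompact_atTop.congr Real.norm_eq_abs)
    (Eventually.of_forall fun r => le_div_self (abs_nonneg r) hε0 hε1)

end Tails

theorem abs_intervalIntegral_div_sub_intervalIntegral_div_le {f : ℝ → ℝ}
    (hf : ContinuousOn f (Ioi 0)) {a b ε C : ℝ} (ha : 0 < a) (hb : 0 < b) (hε0 : 0 < ε)
    (hε1 : ε ≤ 1) (hC : ∀ u, min a b ≤ u → |f u| ≤ C) :
    |(∫ u in a..a / ε, f u) - ∫ u in b..b / ε, f u| ≤ 2 / ε * C * |a - b| := by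
  have hint : ∀ x y, 0 < x → 0 < y → IntervalIntegrable f volume x y := fun x y hx hy =>
    (hf.mono fun u hu => (lt_min hx hy).trans_le hu.1).intervalIntegrable
  have hdiv : ∀ x, 0 < x → 0 < x / ε := fun x hx => div_pos hx hε0
  rw [intervalIntegral.integral_interval_sub_interval_comm (hint _ _ ha (hdiv a ha))
    (hint _ _ hb (hdiv b hb)) (hint _ _ ha hb)]
  have hnear : |∫ u in a..b, f u| ≤ C * |b - a| := by
    simpa only [Real.norm_eq_abs] using
      intervalIntegral.norm_integral_le_of_norm_le_const (f := f) fun u hu => by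
        simpa only [Real.norm_eq_abs] using hC u hu.1.le
  have hmin : min a b ≤ min (a / ε) (b / ε) :=
    min_le_min (le_div_self ha.le hε0 hε1) (le_div_self hb.le hε0 hε1)
  have hfar : |∫ u in a / ε..b / ε, f u| ≤ C * |b / ε - a / ε| := by
    simpa only [Real.norm_eq_abs] using
      intervalIntegral.norm_integral_le_of_norm_le_const (f := f) fun u hu => by
        simpa only [Real.norm_eq_abs] using hC u (hmin.trans hu.1.le)
  rw [← sub_div, abs_div, abs_of_pos hε0, abs_sub_comm] at hfar
  rw [abs_sub_comm] at hnear
  have hC0 : 0 ≤ C * |a - b| := mul_nonneg ((abs_nonneg _).trans (hC _ le_rfl)) (abs_nonneg _)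
  have hε_le : C * |a - b| ≤ C * |a - b| / ε := le_div_self hC0 hε0 hε1
  calc _ ≤ |∫ u in a..b, f u| + |∫ u in a / ε..b / ε, f u| := abs_sub _ _
    _ ≤ C * |a - b| + C * (|a - b| / ε) := add_le_add hnear hfar
    _ ≤ C * |a - b| / ε + C * |a - b| / ε := by rw [mul_div_assoc']; linarith
    _ = 2 / ε * C * |a - b| := by ring

theorem stmt9_general (k : ℝ → ℝ) (hk : Continuous k)
    (θ : ℝ → ℝ)
    (hθ : ∀ x : ℝ, 0 < x → IsLUB ((fun u => |k u| / u) '' Ici x) (θ x))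
    (hθ_int : IntegrableOn (fun r => Real.log r * θ r) (Ioi (1 : ℝ)))
    (ε : ℝ) (hε : ε ∈ Ioo (0 : ℝ) 1)
    (kε : ℝ → ℝ)
    (hkε : ∀ r : ℝ, r ≠ 0 → kε r = ∫ u in |r|..(|r| / ε), k u / u)
    (hkε0 : kε 0 = k 0 * Real.log (1 / ε)) :
    Continuous kε ∧
    Tendsto kε (cocompact ℝ) (nhds 0) ∧
    (∀ x y : ℝ, 0 < x → x ≤ y → θ y ≤ θ x) ∧
    IntegrableOn (fun u => θ u * Real.log u) (Ioi (1 : ℝ)) ∧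
    (∀ r r' : ℝ, r ≠ 0 → r' ≠ 0 →
      |kε r - kε r'| ≤ (2 / ε) * θ (min |r| |r'|) * |r - r'|) := by
  obtain ⟨hε0, hε1⟩ := hε
  have hθ_bound : ∀ x u, 0 < x → x ≤ u → |k u / u| ≤ θ x := fun x u hx hxu => by
    rw [abs_div, abs_of_pos (hx.trans_le hxu)]
    exact (hθ x hx).1 (mem_image_of_mem _ hxu)
  have hθ_nonneg : ∀ x, 0 < x → 0 ≤ θ x := fun x hx =>
    (abs_nonneg _).trans (hθ_bound x x hx le_rfl)
  have hkε_exp : kε = fun r => ∫ s in 0..Real.log (1 / ε), k (|r| * Real.exp s) := by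
    funext r
    rcases eq_or_ne r 0 with rfl | hr
    · simp [hkε0, mul_comm]
    · rw [hkε r hr, ← integral_div_self_eq_integral_comp_mul_exp hk.continuousOn
        (abs_pos.2 hr), Real.exp_log (by positivity), mul_one_div]
  refine ⟨?_, ?_, fun x y hx hxy => ?_, by simpa only [mul_comm] using hθ_int, ?_⟩
  · rw [hkε_exp]
    exact intervalIntegral.continuous_parametric_intervalIntegral_of_continuous'
      (by fun_prop) _ _
  · have hdom : ∀ᶠ u in atTop, |k u / u| ≤ Real.log u * θ u := by
      filter_upwards [eventually_ge_atTop (Real.exp 1)] with u hu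
      have hu0 : 0 < u := (Real.exp_pos 1).trans_le hu
      have hlog : 1 ≤ Real.log u := (Real.le_log_iff_exp_le hu0).2 hu
      exact (hθ_bound u u hu0 le_rfl).trans (le_mul_of_one_le_left (hθ_nonneg u hu0) hlog)
    refine (tendsto_intervalIntegral_abs_abs_div_cocompact hθ_int hdom hε0 hε1.le).congr' ?_
    filter_upwards [(isCompact_singleton (x := (0 : ℝ))).compl_mem_cocompact] with r hr
    exact (hkε r hr).symm
  · exact (hθ y (hx.trans_le hxy)).mono (hθ x hx) (image_mono (Ici_subset_Ici.2 hxy))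
  · intro r r' hr hr'
    have hm : 0 < min |r| |r'| := lt_min (abs_pos.2 hr) (abs_pos.2 hr')
    rw [hkε r hr, hkε r' hr']
    calc _ ≤ 2 / ε * θ (min |r| |r'|) * |(|r| - |r'|)| :=
          abs_intervalIntegral_div_sub_intervalIntegral_div_le
            (hk.continuousOn.div continuousOn_id fun u hu => ne_of_gt hu)
            (abs_pos.2 hr) (abs_pos.2 hr') hε0 hε1.le fun u hu => hθ_bound _ u hm hu
      _ ≤ 2 / ε * θ (min |r| |r'|) * |r - r'| :=
        mul_le_mul_of_nonneg_left (abs_abs_sub_abs_le_abs_sub r r')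
          (mul_nonneg (by positivity) (hθ_nonneg _ hm))

/-- Proposition 2 (analytic content): under the integrability condition
`∫₁^∞ ln r · sup_{u ≥ r}(|k(u)|/u) dr < ∞`, the kernels
`k_ε(r) = ∫_{|r|}^{|r|/ε} k(u)/u du` satisfy the goodness conditions. -/
theorem stmt9 (k : ℝ → ℝ) (hk : Continuous k) (hk_even : ∀ u : ℝ, k (-u) = k u)
    (θ : ℝ → ℝ)
    (hθ : ∀ x : ℝ, 0 < x → IsLUB ((fun u => |k u| / u) '' Ici x) (θ x))
    (hθ_int : IntegrableOn (fun r => Real.log r * θ r) (Ioi (1 : ℝ)))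
    (ε : ℝ) (hε : ε ∈ Ioo (0 : ℝ) 1)
    (kε : ℝ → ℝ)
    (hkε : ∀ r : ℝ, r ≠ 0 → kε r = ∫ u in |r|..(|r| / ε), k u / u)
    (hkε0 : kε 0 = k 0 * Real.log (1 / ε)) :
    Continuous kε ∧
    Tendsto kε (cocompact ℝ) (nhds 0) ∧
    (∀ x y : ℝ, 0 < x → x ≤ y → θ y ≤ θ x) ∧
    IntegrableOn (fun u => θ u * Real.log u) (Ioi (1 : ℝ)) ∧
    (∀ r r' : ℝ, r ≠ 0 → r' ≠ 0 →
      |kε r - kε r'| ≤ (2 / ε) * θ (min |r| |r'|) * |r - r'|) :=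
  stmt9_general k hk θ hθ hθ_int ε hε kε hkε hkε0
end

section
/- Let F be a finite measure on ℝ, define k : ℝ → ℝ by k(t) = ∫_ℝ cos(λ t) F(dλ), and let ε ∈ (0,1). Then for all real t ≠ s, ∫_ℝ ∫_1^{1/ε} (cos(λ t y)·cos(λ s y) + sin(λ t y)·sin(λ s y))·y^{−1} dy F(dλ) = ∫_{|t−s|}^{|t−s|/ε} k(u)/u du. -/
/-!
By the subtraction formula the integrand is `cos (λ (t - s) y) / y`, and the substitution
`u = |t - s| y` turns the inner integral into `∫ u in |t - s|..|t - s| / ε, cos (λ u) / u`.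
On this interval `u` stays away from `0`, so the integrand is bounded by `1 / |t - s|` and Fubini
applies against the finite measure `F`; integrating `cos (λ u)` in `λ` first gives `k u`.
-/

open MeasureTheory Filter Set

theorem Real.cos_mul_abs (x r : ℝ) : Real.cos (x * |r|) = Real.cos (x * r) := by
  rw [← Real.cos_abs, abs_mul, abs_abs, ← abs_mul, Real.cos_abs]

theorem intervalIntegral.integral_comp_mul_left_div_self (g : ℝ → ℝ) {c : ℝ} (hc : c ≠ 0)
    (a b : ℝ) : ∫ y in a..b, g (c * y) / y = ∫ u in c * a..c * b, g u / u := by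
  rw [← intervalIntegral.smul_integral_comp_mul_left (fun u => g u / u), smul_eq_mul,
    ← intervalIntegral.integral_const_mul]
  congr with y
  rw [← mul_div_assoc, mul_div_mul_left _ _ hc]

theorem integrable_cos_mul_div_prod_restrict_Ioc (μ : Measure ℝ) [IsFiniteMeasure μ] {a : ℝ}
    (ha : 0 < a) (b : ℝ) :
    Integrable (Function.uncurry fun x u => Real.cos (x * u) / u)
      (μ.prod (volume.restrict (Ioc a b))) := by
  have : IsFiniteMeasure (volume.restrict (Ioc a b)) :=
    isFiniteMeasure_restrict.2 measure_Ioc_lt_top.ne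
  refine Integrable.of_bound (by fun_prop : Measurable _).aestronglyMeasurable (1 / a) ?_
  filter_upwards [Measure.quasiMeasurePreserving_snd.ae (ae_restrict_mem measurableSet_Ioc)]
    with p hp
  rw [Function.uncurry_def, norm_div, Real.norm_eq_abs, Real.norm_of_nonneg (ha.trans hp.1).le]
  exact div_le_div₀ zero_le_one (Real.abs_cos_le_one _) ha hp.1.le

theorem integral_intervalIntegral_swap {α E : Type*} [MeasurableSpace α] [NormedAddCommGroup E]
    [NormedSpace ℝ E] {μ : Measure α} [SFinite μ] {f : α → ℝ → E} {a b : ℝ} (hab : a ≤ b)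
    (hf : Integrable (Function.uncurry f) (μ.prod (volume.restrict (Ioc a b)))) :
    ∫ x, (∫ u in a..b, f x u) ∂μ = ∫ u in a..b, ∫ x, f x u ∂μ := by
  simp only [intervalIntegral.integral_of_le hab]
  exact integral_integral_swap hf

/-- Covariance computation for the process `X_ε` in the construction part of
Theorem 1: the spectral double integral equals `∫_{|t-s|}^{|t-s|/ε} k(u)/u du`. -/
theorem stmt16 (F : Measure ℝ) [IsFiniteMeasure F] (k : ℝ → ℝ)
    (hk : ∀ t : ℝ, k t = ∫ x, Real.cos (x * t) ∂F)
    (ε : ℝ) (hε : ε ∈ Ioo (0 : ℝ) 1) :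
    ∀ t s : ℝ, t ≠ s →
      (∫ x, (∫ y in (1 : ℝ)..(1 / ε),
          (Real.cos (x * t * y) * Real.cos (x * s * y) +
            Real.sin (x * t * y) * Real.sin (x * s * y)) / y) ∂F)
        = ∫ u in |t - s|..(|t - s| / ε), k u / u := by
  intro t s hts
  have hc : 0 < |t - s| := abs_pos.2 (sub_ne_zero.2 hts)
  have hinner : ∀ x, (∫ y in (1 : ℝ)..(1 / ε),
      (Real.cos (x * t * y) * Real.cos (x * s * y) +
        Real.sin (x * t * y) * Real.sin (x * s * y)) / y)
      = ∫ u in |t - s|..(|t - s| / ε), Real.cos (x * u) / u := fun x => by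
    have hintegrand : ∀ y, (Real.cos (x * t * y) * Real.cos (x * s * y) +
        Real.sin (x * t * y) * Real.sin (x * s * y)) / y = Real.cos (x * (|t - s| * y)) / y :=
      fun y => by
        rw [← Real.cos_sub, show x * (|t - s| * y) = x * y * |t - s| by ring, Real.cos_mul_abs]
        ring_nf
    simp_rw [hintegrand]
    rw [intervalIntegral.integral_comp_mul_left_div_self (fun u => Real.cos (x * u)) hc.ne',
      mul_one, mul_one_div]
  simp_rw [hinner]
  rw [integral_intervalIntegral_swap (le_div_self hc.le hε.1 hε.2.le)
    (integrable_cos_mul_div_prod_restrict_Ioc F hc _)]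
  simp only [hk, integral_div]
end

section
/- Let (Ω, ℱ, ℙ) be a probability space and Y, Y' : Ω → [0,∞) be integrable random variables such that Y' has the same distribution as Y and Y + Y' has the same distribution as 2Y. Then Y = Y' almost surely. -/
/-!
The map `φ x = exp (-x)` is strictly convex on `ℝ` and bounded on `[0, ∞)`, so `φ ∘ Y` is
integrable with no moment assumption on `Y`. Since `(Y + Y') / 2` and `Y'` both have the law of
`Y`, the nonnegative Jensen gap `(φ Y + φ Y') / 2 - φ ((Y + Y') / 2)` has integral zero, hence
vanishes almost surely, and strict convexity turns this into `Y = Y'`.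
-/

open MeasureTheory Filter Set ProbabilityTheory

section Midpoint

variable {s : Set ℝ} {φ : ℝ → ℝ} {x y : ℝ}

theorem ConvexOn.map_add_div_two_le (hφ : ConvexOn ℝ s φ) (hx : x ∈ s) (hy : y ∈ s) :
    φ ((x + y) / 2) ≤ (φ x + φ y) / 2 := by
  have h := hφ.2 hx hy (by norm_num : (0 : ℝ) ≤ 1 / 2) (by norm_num : (0 : ℝ) ≤ 1 / 2)
    (by norm_num)
  rw [smul_eq_mul, smul_eq_mul, smul_eq_mul, smul_eq_mul,
    show (1 / 2 : ℝ) * x + 1 / 2 * y = (x + y) / 2 by ring] at h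
  linarith

theorem StrictConvexOn.eq_of_add_div_two_le_map (hφ : StrictConvexOn ℝ s φ) (hx : x ∈ s)
    (hy : y ∈ s) (h : (φ x + φ y) / 2 ≤ φ ((x + y) / 2)) : x = y := by
  by_contra hxy
  have hlt := hφ.2 hx hy hxy (by norm_num : (0 : ℝ) < 1 / 2) (by norm_num : (0 : ℝ) < 1 / 2)
    (by norm_num)
  rw [smul_eq_mul, smul_eq_mul, smul_eq_mul, smul_eq_mul,
    show (1 / 2 : ℝ) * x + 1 / 2 * y = (x + y) / 2 by ring] at hlt
  linarith

end Midpoint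

theorem strictConvexOn_exp_neg : StrictConvexOn ℝ univ fun x : ℝ => Real.exp (-x) := by
  have h : StrictConvexOn ℝ ((fun x : ℝ => -x) '' univ) Real.exp := by
    rw [image_univ_of_surjective neg_surjective]
    exact strictConvexOn_exp
  exact h.comp_convexOn (concaveOn_id convex_univ).neg (Real.exp_monotone.monotoneOn _)
    neg_injective.injOn

theorem ae_eq_of_identDistrib_of_identDistrib_add_div_two {Ω : Type*} [MeasurableSpace Ω]
    {μ : Measure Ω} {s : Set ℝ} {φ : ℝ → ℝ} {X X' : Ω → ℝ} (hφ : StrictConvexOn ℝ s φ)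
    (hφm : Measurable φ) (hXs : ∀ᵐ ω ∂μ, X ω ∈ s) (hX's : ∀ᵐ ω ∂μ, X' ω ∈ s)
    (hφX : Integrable (fun ω => φ (X ω)) μ) (hid : IdentDistrib X' X μ μ)
    (hmid : IdentDistrib (fun ω => (X ω + X' ω) / 2) X μ μ) :
    X =ᵐ[μ] X' := by
  have hφX' : Integrable (fun ω => φ (X' ω)) μ := (hid.comp hφm).integrable_iff.2 hφX
  have hφmid : Integrable (fun ω => φ ((X ω + X' ω) / 2)) μ :=
    (hmid.comp hφm).integrable_iff.2 hφX
  have hsum : Integrable (fun ω => φ (X ω) + φ (X' ω)) μ := hφX.add hφX'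
  set gap : Ω → ℝ := fun ω => (φ (X ω) + φ (X' ω)) / 2 - φ ((X ω + X' ω) / 2)
  have hgap_int : Integrable gap μ := (hsum.div_const 2).sub hφmid
  have hgap_nonneg : 0 ≤ᵐ[μ] gap := by
    filter_upwards [hXs, hX's] with ω hx hx'
    exact sub_nonneg.2 (hφ.convexOn.map_add_div_two_le hx hx')
  have hgap_integral : ∫ ω, gap ω ∂μ = 0 := by
    have hX' : ∫ ω, φ (X' ω) ∂μ = ∫ ω, φ (X ω) ∂μ := (hid.comp hφm).integral_eq
    have hmid' : ∫ ω, φ ((X ω + X' ω) / 2) ∂μ = ∫ ω, φ (X ω) ∂μ :=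
      (hmid.comp hφm).integral_eq
    rw [integral_sub (hsum.div_const 2) hφmid, integral_div, integral_add hφX hφX', hX', hmid']
    ring
  filter_upwards [(integral_eq_zero_iff_of_nonneg_ae hgap_nonneg hgap_int).1 hgap_integral,
    hXs, hX's] with ω hω hx hx'
  exact hφ.eq_of_add_div_two_le_map hx hx' (sub_eq_zero.1 hω).le

theorem stmt17_general {Ω : Type*} [MeasureSpace Ω] [IsProbabilityMeasure (ℙ : Measure Ω)]
    (Y Y' : Ω → ℝ)
    (hpos : ∀ ω, 0 ≤ Y ω)
    (hid : IdentDistrib Y' Y ℙ ℙ)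
    (hid2 : IdentDistrib (fun ω => Y ω + Y' ω) (fun ω => 2 * Y ω) ℙ ℙ) :
    Y =ᵐ[ℙ] Y' := by
  have hmid : IdentDistrib (fun ω => (Y ω + Y' ω) / 2) Y ℙ ℙ := by
    simpa [Function.comp_def] using hid2.comp (measurable_id.div_const (2 : ℝ))
  have hexp_int : Integrable (fun ω => Real.exp (-Y ω)) := by
    refine .of_bound hid.aemeasurable_snd.neg.exp.aestronglyMeasurable 1
      (ae_of_all _ fun ω => ?_)
    rw [Real.norm_eq_abs, abs_of_pos (Real.exp_pos _), Real.exp_le_one_iff]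
    linarith [hpos ω]
  exact ae_eq_of_identDistrib_of_identDistrib_add_div_two strictConvexOn_exp_neg
    (by fun_prop) (ae_of_all _ fun _ => mem_univ _) (ae_of_all _ fun _ => mem_univ _)
    hexp_int hid hmid

/-- If `Y, Y' ≥ 0` are integrable, `Y'` has the same law as `Y` and `Y + Y'`
has the same law as `2Y`, then `Y = Y'` almost surely. -/
theorem stmt17 {Ω : Type*} [MeasureSpace Ω] [IsProbabilityMeasure (ℙ : Measure Ω)]
    (Y Y' : Ω → ℝ) (hY : Integrable Y) (hY' : Integrable Y')
    (hpos : ∀ ω, 0 ≤ Y ω) (hpos' : ∀ ω, 0 ≤ Y' ω)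
    (hid : IdentDistrib Y' Y ℙ ℙ)
    (hid2 : IdentDistrib (fun ω => Y ω + Y' ω) (fun ω => 2 * Y ω) ℙ ℙ) :
    Y =ᵐ[ℙ] Y' :=
  stmt17_general Y Y' hpos hid hid2
end
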